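/- Let G be a one-clock priced timed game, r a region of G, and ℓ a location of G. Then the function ν ↦ Val_G(ℓ,ν) restricted to r is either constantly +∞ on r, constantly −∞ on r, or finite and continuous on r; moreover, in the finite case, for all ν, ν′ in the same region r, |Val_G(ℓ,ν) − Val_G(ℓ,ν′)| ≤ (w_L + K_fin)·|ν − ν′|, where w_L is the maximal absolute value of a location weight and K_fin is the maximal absolute value of the slopes of the final cost functions. -/

import Mathlib

/-!
One-clock priced timed games (PTGs) with guards and resets, following
"One-Clock Priced Timed Games with Negative Weights"
(Brihaye, Geeraerts, Haddad, Lefaucheux, Monmege).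
-/

noncomputable section
open scoped Classical

/-- A guard: an interval with rational endpoints, each of which may be open or
closed. -/
structure Guard where
  lo : ℚ
  hi : ℚ
  loOpen : Bool
  hiOpen : Bool

/-- Membership of a real clock value in a guard. -/
def Guard.Mem (g : Guard) (x : ℝ) : Prop :=
  (if g.loOpen then (g.lo : ℝ) < x else (g.lo : ℝ) ≤ x) ∧
  (if g.hiOpen then x < (g.hi : ℝ) else x ≤ (g.hi : ℝ))

/-- A one-clock priced timed game.  Locations are partitioned into those of player
Min, player Max and the final ones; some non-final locations are urgent.
Transitions (indexed by the finite type `TI`) carry a guard, a reset flag and an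
integer weight; non-final locations carry integer rates; final locations carry
affine final cost functions with rational coefficients.  All guards are contained in
`[0, M]`. -/
structure PTG where
  Loc : Type
  [fintypeLoc : Fintype Loc]
  [decEqLoc : DecidableEq Loc]
  TI : Type
  [fintypeTI : Fintype TI]
  isMin : Loc → Prop
  isMax : Loc → Prop
  isFin : Loc → Prop
  partition : ∀ ℓ, (isMin ℓ ∧ ¬isMax ℓ ∧ ¬isFin ℓ) ∨ (¬isMin ℓ ∧ isMax ℓ ∧ ¬isFin ℓ) ∨
    (¬isMin ℓ ∧ ¬isMax ℓ ∧ isFin ℓ)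
  isUrg : Loc → Prop
  urg_not_fin : ∀ ℓ, isUrg ℓ → ¬isFin ℓ
  M : ℕ
  src : TI → Loc
  guard : TI → Guard
  reset : TI → Bool
  tgt : TI → Loc
  src_not_fin : ∀ δ, ¬isFin (src δ)
  guard_in_range : ∀ δ, (0 : ℚ) ≤ (guard δ).lo ∧ (guard δ).hi ≤ (M : ℚ) ∧
    (guard δ).lo ≤ (guard δ).hi
  finSlope : Loc → ℚ
  finIntercept : Loc → ℚ
  locWt : Loc → ℤ
  transWt : TI → ℤ

attribute [instance] PTG.fintypeLoc PTG.decEqLoc PTG.fintypeTI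

namespace PTG

/-- The final cost function `φ_ℓ`. -/
def finalCost (G : PTG) (ℓ : G.Loc) (ν : ℝ) : ℝ :=
  (G.finSlope ℓ : ℝ) * ν + (G.finIntercept ℓ : ℝ)

/-- A configuration: a location together with a clock value. -/
abbrev Conf (G : PTG) := G.Loc × ℝ

def validConf (G : PTG) (s : G.Conf) : Prop := 0 ≤ s.2 ∧ s.2 ≤ (G.M : ℝ)

/-- A move: a delay `t` together with a transition `δ`. -/
structure Move (G : PTG) where
  t : ℝ
  δ : G.TI

/-- Availability of a move. -/
def canMove (G : PTG) (s : G.Conf) (m : G.Move) : Prop :=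
  G.src m.δ = s.1 ∧ 0 ≤ m.t ∧ (G.guard m.δ).Mem (s.2 + m.t) ∧ (G.isUrg s.1 → m.t = 0)

/-- Cost `π(δ) + t·π(ℓ)` of a move. -/
def moveCost (G : PTG) (s : G.Conf) (m : G.Move) : ℝ :=
  (G.transWt m.δ : ℝ) + m.t * (G.locWt s.1 : ℝ)

/-- Successor configuration (the clock is reset if the transition asks for it). -/
def applyMove (G : PTG) (s : G.Conf) (m : G.Move) : G.Conf :=
  (G.tgt m.δ, if G.reset m.δ then 0 else s.2 + m.t)

def deadlock (G : PTG) (s : G.Conf) : Prop := ¬∃ m : G.Move, G.canMove s m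

/-- A finite play is represented by its initial configuration together with the
list of successive moves. -/
def ValidFrom (G : PTG) : G.Conf → List G.Move → Prop
  | _, [] => True
  | s, m :: l => G.canMove s m ∧ ValidFrom G (G.applyMove s m) l

def endConf (G : PTG) (s : G.Conf) (l : List G.Move) : G.Conf := l.foldl G.applyMove s

/-- Price of a finite play: the accumulated costs of its moves, plus the final cost
function evaluated at the last configuration if its location is final. -/
def finPrice (G : PTG) : G.Conf → List G.Move → ℝ
  | s, [] => if G.isFin s.1 then G.finalCost s.1 s.2 else 0
  | s, m :: l => G.moveCost s m + finPrice G (G.applyMove s m) l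

/-- A strategy of Min. -/
structure MinStrategy (G : PTG) where
  move : G.Conf → List G.Move → Option G.Move
  legal : ∀ s l, G.validConf s → G.ValidFrom s l → G.isMin (G.endConf s l).1 →
    ¬G.deadlock (G.endConf s l) → ∃ m, move s l = some m ∧ G.canMove (G.endConf s l) m

/-- A strategy of Max. -/
structure MaxStrategy (G : PTG) where
  move : G.Conf → List G.Move → Option G.Move
  legal : ∀ s l, G.validConf s → G.ValidFrom s l → G.isMax (G.endConf s l).1 →
    ¬G.deadlock (G.endConf s l) → ∃ m, move s l = some m ∧ G.canMove (G.endConf s l) m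

/-- One step of the play induced by a pair of strategies. -/
def step (G : PTG) (σmin : MinStrategy G) (σmax : MaxStrategy G) (s : G.Conf)
    (l : List G.Move) : List G.Move :=
  if G.deadlock (G.endConf s l) then l
  else if G.isMin (G.endConf s l).1 then
    match σmin.move s l with
    | some m => l ++ [m]
    | none => l
  else
    match σmax.move s l with
    | some m => l ++ [m]
    | none => l

/-- The successive finite prefixes of the unique completed play determined by an
initial configuration and a pair of strategies. -/
def hist (G : PTG) (σmin : MinStrategy G) (σmax : MaxStrategy G) (s : G.Conf) :
    ℕ → List G.Move
  | 0 => []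
  | n + 1 => G.step σmin σmax s (hist G σmin σmax s n)

/-- Price of the completed play determined by an initial configuration and a pair of
strategies. -/
def playCost (G : PTG) (s : G.Conf) (σmin : MinStrategy G) (σmax : MaxStrategy G) :
    EReal :=
  if h : ∃ n, G.isFin (G.endConf s (G.hist σmin σmax s n)).1 then
    ((G.finPrice s (G.hist σmin σmax s (Nat.find h)) : ℝ) : EReal)
  else ⊤

/-- Upper value. -/
def upperVal (G : PTG) (s : G.Conf) : EReal :=
  ⨅ σmin : MinStrategy G, ⨆ σmax : MaxStrategy G, G.playCost s σmin σmax

/-- The value of the game (PTGs are determined). -/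
def val (G : PTG) (ℓ : G.Loc) (ν : ℝ) : EReal := G.upperVal (ℓ, ν)

/-- The endpoints of the guards of `G`, together with `0`. -/
def endpoints (G : PTG) : Finset ℚ :=
  insert 0 ((Finset.univ.image fun δ => (G.guard δ).lo) ∪
    (Finset.univ.image fun δ => (G.guard δ).hi))

/-- The regions of `G`: the singletons `{M_i}` and the open intervals
`(M_i, M_{i+1})` between consecutive elements `M_0 = 0 < M_1 < ⋯ < M_k` of the set
of endpoints of the guards of `G` (together with `0`). -/
def IsRegion (G : PTG) (R : Set ℝ) : Prop :=
  (∃ p ∈ G.endpoints, R = {(p : ℝ)}) ∨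
  (∃ p ∈ G.endpoints, ∃ q ∈ G.endpoints, p < q ∧
    (∀ u ∈ G.endpoints, ¬(p < u ∧ u < q)) ∧ R = Set.Ioo (p : ℝ) (q : ℝ))

/-- `w_L`: the largest absolute value of a (non-final) location weight. -/
def wL (G : PTG) : ℝ :=
  ⨆ ℓ : G.Loc, if G.isFin ℓ then 0 else |(G.locWt ℓ : ℝ)|

/-- `K_fin`: the largest absolute value of a slope of a final cost function. -/
def Kfin (G : PTG) : ℝ :=
  ⨆ ℓ : G.Loc, if G.isFin ℓ then |(G.finSlope ℓ : ℝ)| else 0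

/-- `w_T` as a natural number: the largest absolute value of a transition weight. -/
def wTN (G : PTG) : ℕ := Finset.univ.sup fun δ : G.TI => (G.transWt δ).natAbs

/-- `w_L` as a natural number. -/
def wLN (G : PTG) : ℕ :=
  Finset.univ.sup fun ℓ : G.Loc => if G.isFin ℓ then 0 else (G.locWt ℓ).natAbs

end PTG

/-!
Every guard holds either on all of a region `R` or nowhere on it.  Hence a move from `(ℓ, ν)`
can be copied from `(ℓ, ν')`, with `ν, ν' ∈ R`, by firing the same transition after the delay
that reaches the same clock value, or immediately if that clock value is already exceeded.
Along two plays coupled in this way the locations agree, the clock values stay at distance at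
most `|ν - ν'|`, and the delays differ in total by at most `|ν - ν'|` minus the current clock
distance, so the prices differ by at most `(w_L + K_fin) |ν - ν'|`.  Each player can copy any
strategy of the other side, reconstructing the other side's history from its own, which gives
`Val(ℓ, ν') ≤ Val(ℓ, ν) + (w_L + K_fin) |ν - ν'|`.  A function to `[-∞, +∞]` satisfying such a
bound on `R` is constantly `+∞`, constantly `-∞`, or finite and Lipschitz on `R`.
-/

namespace EReal

lemma le_iInf_add_coe {ι : Sort*} {a : EReal} {f : ι → EReal} {c : ℝ}
    (h : ∀ i, a ≤ f i + c) : a ≤ (⨅ i, f i) + c := by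
  have hsub : ∀ x : EReal, a - c ≤ x ↔ a ≤ x + c := fun _ =>
    EReal.sub_le_iff_le_add (.inl (EReal.coe_ne_bot c)) (.inl (EReal.coe_ne_top c))
  exact (hsub _).1 (le_iInf fun i => (hsub _).2 (h i))

theorem trichotomy_of_le_add_mul_abs_sub {S : Set ℝ} {f : ℝ → EReal} {C : ℝ}
    (h : ∀ x ∈ S, ∀ y ∈ S, f y ≤ f x + ((C * |x - y| : ℝ) : EReal)) :
    (∀ x ∈ S, f x = ⊤) ∨ (∀ x ∈ S, f x = ⊥) ∨
      ((∀ x ∈ S, ∃ v : ℝ, f x = v) ∧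
        ∀ x ∈ S, ∀ y ∈ S, |(f x).toReal - (f y).toReal| ≤ C * |x - y|) := by
  rcases S.eq_empty_or_nonempty with rfl | ⟨x₀, hx₀⟩
  · simp
  have top_of_top : ∀ x ∈ S, ∀ y ∈ S, f x = ⊤ → f y = ⊤ := fun x hx y hy hx_top => by
    by_contra hne
    have hlt : f y + ((C * |y - x| : ℝ) : EReal) < ⊤ := Ne.lt_top <|
      (EReal.add_ne_top_iff_ne_top_left (EReal.coe_ne_bot _) (EReal.coe_ne_top _)).2 hne
    exact (h y hy x hx).not_gt (hx_top ▸ hlt)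
  have bot_of_bot : ∀ x ∈ S, ∀ y ∈ S, f x = ⊥ → f y = ⊥ := fun x hx y hy hx_bot =>
    le_bot_iff.1 <| (h x hx y hy).trans_eq (by rw [hx_bot, EReal.bot_add])
  by_cases htop : f x₀ = ⊤
  · exact .inl fun x hx => top_of_top x₀ hx₀ x hx htop
  by_cases hbot : f x₀ = ⊥
  · exact .inr <| .inl fun x hx => bot_of_bot x₀ hx₀ x hx hbot
  have hfin : ∀ x ∈ S, ((f x).toReal : EReal) = f x := fun x hx =>
    EReal.coe_toReal (fun h => htop (top_of_top x hx x₀ hx₀ h))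
      (fun h => hbot (bot_of_bot x hx x₀ hx₀ h))
  have hle : ∀ x ∈ S, ∀ y ∈ S, (f y).toReal ≤ (f x).toReal + C * |x - y| := fun x hx y hy => by
    have := h x hx y hy
    rwa [← hfin x hx, ← hfin y hy, ← EReal.coe_add, EReal.coe_le_coe_iff] at this
  refine .inr <| .inr ⟨fun x hx => ⟨_, (hfin x hx).symm⟩, fun x hx y hy => ?_⟩
  have := hle y hy x hx
  rw [abs_sub_comm y] at this
  exact abs_sub_le_iff.2 ⟨by linarith, by linarith [hle x hx y hy]⟩

end EReal

namespace Guard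

variable {g : Guard} {x : ℝ}

lemma lo_le_of_mem (h : g.Mem x) : (g.lo : ℝ) ≤ x := by
  have := h.1
  split_ifs at this <;> linarith

lemma le_hi_of_mem (h : g.Mem x) : x ≤ (g.hi : ℝ) := by
  have := h.2
  split_ifs at this <;> linarith

lemma mem_of_lt_of_lt (hlo : (g.lo : ℝ) < x) (hhi : x < (g.hi : ℝ)) : g.Mem x :=
  ⟨by split_ifs <;> linarith, by split_ifs <;> linarith⟩

end Guard

namespace PTG

variable {G : PTG} {R : Set ℝ}

lemma endConf_append (s : G.Conf) (l : List G.Move) (m : G.Move) :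
    G.endConf s (l ++ [m]) = G.applyMove (G.endConf s l) m :=
  List.foldl_concat ..

lemma validFrom_append {s : G.Conf} {l : List G.Move} {m : G.Move} :
    G.ValidFrom s (l ++ [m]) ↔ G.ValidFrom s l ∧ G.canMove (G.endConf s l) m := by
  induction l generalizing s with
  | nil => simp [ValidFrom, endConf]
  | cons m₀ l ih => simp only [List.cons_append, ValidFrom, ih, and_assoc]; rfl

def runCost (G : PTG) : G.Conf → List G.Move → ℝ
  | _, [] => 0
  | s, m :: l => G.moveCost s m + runCost G (G.applyMove s m) l

lemma runCost_append (s : G.Conf) (l : List G.Move) (m : G.Move) :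
    G.runCost s (l ++ [m]) = G.runCost s l + G.moveCost (G.endConf s l) m := by
  induction l generalizing s with
  | nil => simp [runCost, endConf]
  | cons m₀ l ih =>
    simp only [List.cons_append, runCost, ih, add_assoc]
    rfl

lemma finPrice_eq_runCost_add (s : G.Conf) (l : List G.Move) :
    G.finPrice s l = G.runCost s l +
      if G.isFin (G.endConf s l).1 then G.finalCost (G.endConf s l).1 (G.endConf s l).2
      else 0 := by
  induction l generalizing s with
  | nil =>
    simp only [finPrice, runCost, endConf, List.foldl_nil, zero_add]
    congr
  | cons m₀ l ih =>
    simp only [finPrice, runCost, ih, add_assoc]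
    rfl

lemma abs_locWt_le_wL {ℓ : G.Loc} (h : ¬G.isFin ℓ) : |(G.locWt ℓ : ℝ)| ≤ G.wL := by
  simpa [wL, h] using le_ciSup (Set.finite_range fun ℓ =>
    if G.isFin ℓ then (0 : ℝ) else |(G.locWt ℓ : ℝ)|).bddAbove ℓ

lemma abs_finSlope_le_Kfin {ℓ : G.Loc} (h : G.isFin ℓ) : |(G.finSlope ℓ : ℝ)| ≤ G.Kfin := by
  simpa [Kfin, h] using le_ciSup (Set.finite_range fun ℓ =>
    if G.isFin ℓ then |(G.finSlope ℓ : ℝ)| else (0 : ℝ)).bddAbove ℓ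

lemma wL_nonneg : 0 ≤ G.wL :=
  Real.iSup_nonneg fun _ => by positivity

lemma Kfin_nonneg : 0 ≤ G.Kfin :=
  Real.iSup_nonneg fun _ => by positivity

lemma deadlock_of_isFin {s : G.Conf} (h : G.isFin s.1) : G.deadlock s :=
  fun ⟨m, hm⟩ => G.src_not_fin m.δ (hm.1 ▸ h)

lemma isMax_of_not_isMin {s : G.Conf} (hmin : ¬G.isMin s.1) (hd : ¬G.deadlock s) :
    G.isMax s.1 := by
  rcases G.partition s.1 with ⟨h, -⟩ | ⟨-, h, -⟩ | ⟨-, -, h⟩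
  · exact absurd h hmin
  · exact h
  · exact absurd (deadlock_of_isFin h) hd

structure IsUniformRegion (G : PTG) (R : Set ℝ) : Prop where
  subset_Icc : R ⊆ Set.Icc 0 (G.M : ℝ)
  ordConnected : R.OrdConnected
  guard_mem : ∀ δ, ∀ x ∈ R, ∀ y ∈ R, (G.guard δ).Mem x → (G.guard δ).Mem y

lemma endpoint_mem_Icc {p : ℚ} (hp : p ∈ G.endpoints) : p ∈ Set.Icc 0 (G.M : ℚ) := by
  simp only [endpoints, Finset.mem_insert, Finset.mem_union, Finset.mem_image,
    Finset.mem_univ, true_and] at hp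
  rcases hp with rfl | ⟨δ, rfl⟩ | ⟨δ, rfl⟩
  · exact ⟨le_rfl, by positivity⟩
  all_goals obtain ⟨h0, hM, hlohi⟩ := G.guard_in_range δ
  · exact ⟨h0, hlohi.trans hM⟩
  · exact ⟨h0.trans hlohi, hM⟩

lemma lo_mem_endpoints (δ : G.TI) : (G.guard δ).lo ∈ G.endpoints := by
  simp [endpoints]

lemma hi_mem_endpoints (δ : G.TI) : (G.guard δ).hi ∈ G.endpoints := by
  simp [endpoints]

lemma guard_mem_of_mem_Ioo {p q : ℚ} (hgap : ∀ u ∈ G.endpoints, ¬(p < u ∧ u < q)) (δ : G.TI)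
    {x y : ℝ} (hx : x ∈ Set.Ioo (p : ℝ) q) (hy : y ∈ Set.Ioo (p : ℝ) q)
    (hmem : (G.guard δ).Mem x) : (G.guard δ).Mem y := by
  have hlo : ((G.guard δ).lo : ℝ) ≤ p := by
    by_contra! hlt
    have hloq : ((G.guard δ).lo : ℝ) < q := (Guard.lo_le_of_mem hmem).trans_lt hx.2
    exact hgap _ (lo_mem_endpoints δ) ⟨by exact_mod_cast hlt, by exact_mod_cast hloq⟩
  have hhi : (q : ℝ) ≤ (G.guard δ).hi := by
    by_contra! hlt
    have hphi : (p : ℝ) < (G.guard δ).hi := hx.1.trans_le (Guard.le_hi_of_mem hmem)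
    exact hgap _ (hi_mem_endpoints δ) ⟨by exact_mod_cast hphi, by exact_mod_cast hlt⟩
  exact Guard.mem_of_lt_of_lt (hlo.trans_lt hy.1) (hy.2.trans_le hhi)

lemma IsRegion.isUniformRegion {R : Set ℝ} (hR : G.IsRegion R) : G.IsUniformRegion R := by
  rcases hR with ⟨p, hp, rfl⟩ | ⟨p, hp, q, hq, -, hgap, rfl⟩
  · obtain ⟨h0, hM⟩ := endpoint_mem_Icc hp
    refine ⟨?_, Set.ordConnected_singleton, fun δ x hx y hy hmem => ?_⟩
    · rw [Set.singleton_subset_iff]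
      exact ⟨by exact_mod_cast h0, by exact_mod_cast hM⟩
    · rwa [Set.eq_of_mem_singleton hy, ← Set.eq_of_mem_singleton hx]
  · have h0 : (0 : ℝ) ≤ p := by exact_mod_cast (endpoint_mem_Icc hp).1
    have hM : (q : ℝ) ≤ G.M := by exact_mod_cast (endpoint_mem_Icc hq).2
    exact ⟨Set.Ioo_subset_Icc_self.trans (Set.Icc_subset_Icc h0 hM), Set.ordConnected_Ioo,
      fun δ _ hx _ hy => guard_mem_of_mem_Ioo hgap δ hx hy⟩

def EqOrBothIn (R : Set ℝ) (x y : ℝ) : Prop := x = y ∨ (x ∈ R ∧ y ∈ R)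

lemma EqOrBothIn.symm {x y : ℝ} (h : EqOrBothIn R x y) : EqOrBothIn R y x :=
  h.imp Eq.symm And.symm

lemma IsUniformRegion.guard_mem_of_eqOrBothIn (hR : G.IsUniformRegion R) {δ : G.TI}
    {x y : ℝ} (h : EqOrBothIn R x y) (hx : (G.guard δ).Mem x) : (G.guard δ).Mem y :=
  h.elim (· ▸ hx) fun ⟨hxR, hyR⟩ => hR.guard_mem δ x hxR y hyR hx

/-- Waiting `max 0 (x + t - x')` from `x'` reaches the clock value `x + t` when `x' ≤ x + t`;
otherwise `x < x + t < x'` all lie in `R`. -/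
lemma eqOrBothIn_add_max_sub (hR : R.OrdConnected) {x x' t : ℝ} (ht : 0 ≤ t)
    (hx : EqOrBothIn R x x') :
    EqOrBothIn R (x + t) (x' + max 0 (x + t - x')) ∧
      |max 0 (x + t - x') - t| + |x' + max 0 (x + t - x') - (x + t)| ≤ |x' - x| := by
  rcases le_or_gt x' (x + t) with hle | hlt
  · rw [max_eq_right (by linarith), add_sub_cancel, sub_self, abs_zero, add_zero,
      show x + t - x' - t = -(x' - x) by ring, abs_neg]
    exact ⟨.inl rfl, le_rfl⟩
  · rw [max_eq_left (by linarith), add_zero, zero_sub, abs_neg, abs_of_nonneg ht,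
      abs_of_pos (by linarith), abs_of_pos (by linarith)]
    obtain ⟨hxR, hx'R⟩ := hx.resolve_left (by rintro rfl; linarith)
    exact ⟨.inr ⟨hR.out hxR hx'R ⟨by linarith, hlt.le⟩, hx'R⟩, by linarith⟩

variable (G) in
/-- The copy from `e'` of the move `m` from `e`. -/
def shiftMove (e e' : G.Conf) (m : G.Move) : G.Move :=
  ⟨if G.isUrg e.1 then 0 else max 0 (e.2 + m.t - e'.2), m.δ⟩

@[simp]
lemma shiftMove_δ (e e' : G.Conf) (m : G.Move) : (G.shiftMove e e' m).δ = m.δ := rfl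

lemma shiftMove_spec (hR : R.OrdConnected) {e e' : G.Conf} (he : EqOrBothIn R e.2 e'.2)
    {m : G.Move} (hm : G.canMove e m) :
    EqOrBothIn R (e.2 + m.t) (e'.2 + (G.shiftMove e e' m).t) ∧
      |(G.shiftMove e e' m).t - m.t| + |e'.2 + (G.shiftMove e e' m).t - (e.2 + m.t)| ≤
        |e'.2 - e.2| := by
  by_cases hu : G.isUrg e.1
  · simpa [shiftMove, hu, hm.2.2.2 hu] using he
  · simpa only [shiftMove, if_neg hu] using eqOrBothIn_add_max_sub hR hm.2.1 he

/-- Configurations that no guard can distinguish. -/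
def Similar (R : Set ℝ) (e e' : G.Conf) : Prop := e.1 = e'.1 ∧ EqOrBothIn R e.2 e'.2

lemma Similar.symm {e e' : G.Conf} (h : Similar R e e') : Similar R e' e :=
  ⟨h.1.symm, h.2.symm⟩

lemma abs_applyMove_sub_le (e e' : G.Conf) (m : G.Move) :
    |(G.applyMove e m).2 - (G.applyMove e' (G.shiftMove e e' m)).2| ≤
      |e'.2 + (G.shiftMove e e' m).t - (e.2 + m.t)| := by
  cases hreset : G.reset m.δ
  · simp [applyMove, hreset, abs_sub_comm]
  · simp [applyMove, hreset]

lemma canMove_shiftMove (hR : G.IsUniformRegion R) {e e' : G.Conf} (h : Similar R e e')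
    {m : G.Move} (hm : G.canMove e m) : G.canMove e' (G.shiftMove e e' m) := by
  refine ⟨hm.1.trans h.1, ?_, ?_, fun hu => ?_⟩
  · dsimp only [shiftMove]
    split_ifs
    exacts [le_rfl, le_max_left _ _]
  · exact hR.guard_mem_of_eqOrBothIn (shiftMove_spec hR.ordConnected h.2 hm).1 hm.2.2.1
  · simp [shiftMove, h.1, hu]

lemma similar_applyMove_shiftMove (hR : R.OrdConnected) {e e' : G.Conf} (h : Similar R e e')
    {m : G.Move} (hm : G.canMove e m) :
    Similar R (G.applyMove e m) (G.applyMove e' (G.shiftMove e e' m)) := by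
  refine ⟨rfl, ?_⟩
  cases hreset : G.reset m.δ
  · simpa [applyMove, hreset] using (shiftMove_spec hR h.2 hm).1
  · simp [applyMove, hreset, EqOrBothIn]

lemma Similar.deadlock_iff (hR : G.IsUniformRegion R) {e e' : G.Conf} (h : Similar R e e') :
    G.deadlock e ↔ G.deadlock e' :=
  not_congr ⟨fun ⟨_, hm⟩ => ⟨_, canMove_shiftMove hR h hm⟩,
    fun ⟨_, hm⟩ => ⟨_, canMove_shiftMove hR h.symm hm⟩⟩

lemma abs_add_mul_sub_le {a a' c t t' w W D d d' : ℝ} (ha : |a - a'| ≤ W * (D - d))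
    (hw : |w| ≤ W) (ht : |t' - t| + d' ≤ d) :
    |a + (c + t * w) - (a' + (c + t' * w))| ≤ W * (D - d') := by
  calc |a + (c + t * w) - (a' + (c + t' * w))| = |(a - a') + (t - t') * w| := by
        congr 1; ring
    _ ≤ |a - a'| + |t' - t| * W := by
        rw [abs_sub_comm t' t]
        exact (abs_add_le _ _).trans (by rw [abs_mul]; gcongr)
    _ ≤ W * (D - d) + (d - d') * W := by
        have := (abs_nonneg w).trans hw
        gcongr
        linarith
    _ = W * (D - d') := by ring

structure Coupled (R : Set ℝ) (s : G.Conf) (l : List G.Move) (s' : G.Conf)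
    (l' : List G.Move) : Prop where
  validFrom : G.ValidFrom s l
  validFrom' : G.ValidFrom s' l'
  similar : Similar R (G.endConf s l) (G.endConf s' l')
  abs_clock_sub_le : |(G.endConf s l).2 - (G.endConf s' l').2| ≤ |s.2 - s'.2|
  abs_runCost_sub_le : |G.runCost s l - G.runCost s' l'| ≤
    G.wL * (|s.2 - s'.2| - |(G.endConf s l).2 - (G.endConf s' l').2|)

namespace Coupled

variable {s s' : G.Conf} {l l' : List G.Move}

lemma nil (h : Similar R s s') : Coupled R s [] s' [] :=
  ⟨trivial, trivial, h, le_rfl, by simp [runCost, endConf]⟩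

lemma symm (h : Coupled R s l s' l') : Coupled R s' l' s l := by
  refine ⟨h.validFrom', h.validFrom, h.similar.symm, ?_, ?_⟩
  · simpa only [abs_sub_comm] using h.abs_clock_sub_le
  · simpa only [abs_sub_comm] using h.abs_runCost_sub_le

lemma append_shiftMove (hR : G.IsUniformRegion R) (h : Coupled R s l s' l') {m : G.Move}
    (hm : G.canMove (G.endConf s l) m) :
    Coupled R s (l ++ [m]) s' (l' ++ [G.shiftMove (G.endConf s l) (G.endConf s' l') m]) := by
  have hdelay := (shiftMove_spec hR.ordConnected h.similar.2 hm).2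
  have hclock := abs_applyMove_sub_le (G.endConf s l) (G.endConf s' l') m
  have hdist := abs_sub_comm (G.endConf s' l').2 (G.endConf s l).2
  refine ⟨validFrom_append.2 ⟨h.validFrom, hm⟩,
    validFrom_append.2 ⟨h.validFrom', canMove_shiftMove hR h.similar hm⟩, ?_, ?_, ?_⟩ <;>
    rw [endConf_append, endConf_append]
  · exact similar_applyMove_shiftMove hR.ordConnected h.similar hm
  · linarith [h.abs_clock_sub_le, abs_nonneg ((G.shiftMove (G.endConf s l)
      (G.endConf s' l') m).t - m.t)]
  · have hwt : |(G.locWt (G.endConf s l).1 : ℝ)| ≤ G.wL :=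
      abs_locWt_le_wL (hm.1 ▸ G.src_not_fin m.δ)
    rw [runCost_append, runCost_append, moveCost, moveCost, shiftMove_δ, ← h.similar.1]
    exact abs_add_mul_sub_le h.abs_runCost_sub_le hwt (by linarith)

lemma finPrice_le (h : Coupled R s l s' l') (hfin : G.isFin (G.endConf s l).1) :
    G.finPrice s' l' ≤ G.finPrice s l + (G.wL + G.Kfin) * |s.2 - s'.2| := by
  have hfin' : G.isFin (G.endConf s' l').1 := h.similar.1 ▸ hfin
  rw [finPrice_eq_runCost_add, finPrice_eq_runCost_add, if_pos hfin, if_pos hfin', finalCost,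
    finalCost, ← h.similar.1]
  have hslope : |(G.finSlope (G.endConf s l).1 : ℝ)| * |(G.endConf s l).2 - (G.endConf s' l').2|
      ≤ G.Kfin * |s.2 - s'.2| :=
    mul_le_mul (abs_finSlope_le_Kfin hfin) h.abs_clock_sub_le (abs_nonneg _) Kfin_nonneg
  rw [← abs_mul, mul_sub] at hslope
  have hclock := mul_nonneg (wL_nonneg (G := G))
    (abs_nonneg ((G.endConf s l).2 - (G.endConf s' l').2))
  linarith [neg_abs_le (G.runCost s l - G.runCost s' l'), h.abs_runCost_sub_le,
    neg_abs_le ((G.finSlope (G.endConf s l).1 : ℝ) * (G.endConf s l).2 -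
      (G.finSlope (G.endConf s l).1 : ℝ) * (G.endConf s' l').2)]

end Coupled

lemma playCost_le_of_coupled {s s' : G.Conf} {σ σ' : MinStrategy G} {τ τ' : MaxStrategy G}
    (h : ∀ n, Coupled R s (G.hist σ τ s n) s' (G.hist σ' τ' s' n)) :
    G.playCost s' σ' τ' ≤ G.playCost s σ τ + (((G.wL + G.Kfin) * |s.2 - s'.2| : ℝ) : EReal) := by
  have hfin_iff : ∀ {n}, G.isFin (G.endConf s' (G.hist σ' τ' s' n)).1 ↔
      G.isFin (G.endConf s (G.hist σ τ s n)).1 := fun {n} => by rw [(h n).similar.1]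
  unfold playCost
  by_cases hex : ∃ n, G.isFin (G.endConf s (G.hist σ τ s n)).1
  · have hex' : ∃ n, G.isFin (G.endConf s' (G.hist σ' τ' s' n)).1 :=
      hex.imp fun _ => hfin_iff.2
    rw [dif_pos hex, dif_pos hex', Nat.find_congr' hfin_iff, ← EReal.coe_add,
      EReal.coe_le_coe_iff]
    exact (h _).finPrice_le (Nat.find_spec hex)
  · rw [dif_neg hex, EReal.top_add_coe]
    exact le_top

variable (G) in
def defMove (e : G.Conf) : Option G.Move :=
  if h : ∃ m, G.canMove e m then some h.choose else none

variable (G) in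
def legalize (e : G.Conf) : Option G.Move → Option G.Move
  | some m => if G.canMove e m then some m else G.defMove e
  | none => G.defMove e

lemma defMove_spec {e : G.Conf} (h : ¬G.deadlock e) :
    ∃ m, G.defMove e = some m ∧ G.canMove e m := by
  rw [deadlock, not_not] at h
  exact ⟨h.choose, dif_pos h, h.choose_spec⟩

lemma legalize_spec {e : G.Conf} (o : Option G.Move) (h : ¬G.deadlock e) :
    ∃ m, G.legalize e o = some m ∧ G.canMove e m := by
  cases o with
  | none => exact defMove_spec h
  | some m =>
    by_cases hm : G.canMove e m
    · exact ⟨m, if_pos hm, hm⟩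
    · simpa only [legalize, if_neg hm] using defMove_spec h

lemma legalize_some {e : G.Conf} {m : G.Move} (hm : G.canMove e m) :
    G.legalize e (some m) = some m :=
  if_pos hm

def MinStrategy.ofProposal (p : G.Conf → List G.Move → Option G.Move) : MinStrategy G where
  move s l := G.legalize (G.endConf s l) (p s l)
  legal _ _ _ _ _ h := legalize_spec _ h

def MaxStrategy.ofProposal (p : G.Conf → List G.Move → Option G.Move) : MaxStrategy G where
  move s l := G.legalize (G.endConf s l) (p s l)
  legal _ _ _ _ _ h := legalize_spec _ h

lemma step_of_deadlock {σ : MinStrategy G} {τ : MaxStrategy G} {s : G.Conf} {l : List G.Move}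
    (hd : G.deadlock (G.endConf s l)) : G.step σ τ s l = l := by
  rw [step, if_pos hd]

lemma step_of_isMin {σ : MinStrategy G} {τ : MaxStrategy G} {s : G.Conf} {l : List G.Move}
    {m : G.Move} (hd : ¬G.deadlock (G.endConf s l)) (hmin : G.isMin (G.endConf s l).1)
    (hm : σ.move s l = some m) : G.step σ τ s l = l ++ [m] := by
  rw [step, if_neg hd, if_pos hmin, hm]

lemma step_of_not_isMin {σ : MinStrategy G} {τ : MaxStrategy G} {s : G.Conf}
    {l : List G.Move} {m : G.Move} (hd : ¬G.deadlock (G.endConf s l))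
    (hmin : ¬G.isMin (G.endConf s l).1) (hm : τ.move s l = some m) :
    G.step σ τ s l = l ++ [m] := by
  rw [step, if_neg hd, if_neg hmin, hm]

section Shadow

variable (own : List G.Move → Option G.Move) (isOwn : G.Loc → Prop) (s₀ : G.Conf)

/-- The next move of a play `acc` from `s₀` that follows `own` at `isOwn` locations and
elsewhere copies the move `m'` played from `e'` on the other side. -/
def shadowMove (acc : List G.Move) (e' : G.Conf) (m' : G.Move) : G.Move :=
  if isOwn (G.endConf s₀ acc).1 then (own acc).getD m' else G.shiftMove e' (G.endConf s₀ acc) m'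

/-- The play from `s₀` shadowing the play `l` from `t₀`. -/
def shadow (t₀ : G.Conf) (l : List G.Move) : List G.Move :=
  (l.foldl (fun p m' => (p.1 ++ [shadowMove own isOwn s₀ p.1 p.2 m'], G.applyMove p.2 m'))
    ([], t₀)).1

lemma shadow_append (t₀ : G.Conf) (l : List G.Move) (m' : G.Move) :
    shadow own isOwn s₀ t₀ (l ++ [m']) = shadow own isOwn s₀ t₀ l ++
      [shadowMove own isOwn s₀ (shadow own isOwn s₀ t₀ l) (G.endConf t₀ l) m'] := by
  have hsnd : ∀ (l : List G.Move) p, (l.foldl (fun p m' =>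
      (p.1 ++ [shadowMove own isOwn s₀ p.1 p.2 m'], G.applyMove p.2 m')) p).2 =
      G.endConf p.2 l := by
    intro l
    induction l with
    | nil => intro; rfl
    | cons m l ih => intro p; exact ih _
  simp only [shadow, List.foldl_append, List.foldl_cons, List.foldl_nil, hsnd]

def mimicProposal (t₀ : G.Conf) (l : List G.Move) : Option G.Move :=
  (own (shadow own isOwn s₀ t₀ l)).map
    (G.shiftMove (G.endConf s₀ (shadow own isOwn s₀ t₀ l)) (G.endConf t₀ l))

lemma legalize_mimicProposal {t₀ : G.Conf} {l acc : List G.Move} {m : G.Move}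
    (hacc : shadow own isOwn s₀ t₀ l = acc) (hm : own acc = some m)
    (hcan : G.canMove (G.endConf t₀ l) (G.shiftMove (G.endConf s₀ acc) (G.endConf t₀ l) m)) :
    G.legalize (G.endConf t₀ l) (mimicProposal own isOwn s₀ t₀ l) =
      some (G.shiftMove (G.endConf s₀ acc) (G.endConf t₀ l) m) := by
  rw [mimicProposal, hacc, hm, Option.map_some, legalize_some hcan]

end Shadow

/-- Min's strategy copying `σ`, which is played in the shadow from `s₀`; dually for Max. -/
def MinStrategy.mimic (σ : MinStrategy G) (s₀ : G.Conf) : MinStrategy G :=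
  .ofProposal (mimicProposal (σ.move s₀) G.isMin s₀)

def MaxStrategy.mimic (τ : MaxStrategy G) (s₀ : G.Conf) : MaxStrategy G :=
  .ofProposal (mimicProposal (τ.move s₀) (fun x => ¬G.isMin x) s₀)

/-- A play from `s` under `σ` and a play from `s'` under `τ`, each the shadow of the other. -/
structure Mirrored (R : Set ℝ) (σ : MinStrategy G) (τ : MaxStrategy G) (s s' : G.Conf)
    (l l' : List G.Move) : Prop where
  shadow_min : shadow (σ.move s) G.isMin s s' l' = l
  shadow_max : shadow (τ.move s') (fun x => ¬G.isMin x) s' s l = l'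
  coupled : Coupled R s l s' l'

namespace Mirrored

variable {σ : MinStrategy G} {τ : MaxStrategy G} {s s' : G.Conf} {l l' : List G.Move}

lemma step_of_deadlock (hR : G.IsUniformRegion R) (h : Mirrored R σ τ s s' l l')
    (hd : G.deadlock (G.endConf s l)) :
    Mirrored R σ τ s s' (G.step σ (τ.mimic s') s l) (G.step (σ.mimic s) τ s' l') := by
  rwa [PTG.step_of_deadlock hd, PTG.step_of_deadlock ((h.coupled.similar.deadlock_iff hR).1 hd)]

lemma step_of_isMin (hR : G.IsUniformRegion R) (hs : G.validConf s)
    (h : Mirrored R σ τ s s' l l') (hd : ¬G.deadlock (G.endConf s l))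
    (hmin : G.isMin (G.endConf s l).1) :
    Mirrored R σ τ s s' (G.step σ (τ.mimic s') s l) (G.step (σ.mimic s) τ s' l') := by
  obtain ⟨m, hσ, hm⟩ := σ.legal s l hs h.coupled.validFrom hmin hd
  have hd' := (h.coupled.similar.deadlock_iff hR).not.1 hd
  have hmin' : G.isMin (G.endConf s' l').1 := h.coupled.similar.1 ▸ hmin
  have hmove : (σ.mimic s).move s' l' =
      some (G.shiftMove (G.endConf s l) (G.endConf s' l') m) :=
    legalize_mimicProposal _ _ _ h.shadow_min hσ (canMove_shiftMove hR h.coupled.similar hm)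
  rw [PTG.step_of_isMin hd hmin hσ, PTG.step_of_isMin hd' hmin' hmove]
  refine ⟨?_, ?_, h.coupled.append_shiftMove hR hm⟩
  · rw [shadow_append, h.shadow_min, shadowMove, if_pos hmin, hσ, Option.getD_some]
  · rw [shadow_append, h.shadow_max, shadowMove, if_neg (not_not.2 hmin')]

lemma step_of_not_isMin (hR : G.IsUniformRegion R) (hs' : G.validConf s')
    (h : Mirrored R σ τ s s' l l') (hd : ¬G.deadlock (G.endConf s l))
    (hmin : ¬G.isMin (G.endConf s l).1) :
    Mirrored R σ τ s s' (G.step σ (τ.mimic s') s l) (G.step (σ.mimic s) τ s' l') := by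
  have hd' := (h.coupled.similar.deadlock_iff hR).not.1 hd
  have hmin' : ¬G.isMin (G.endConf s' l').1 := h.coupled.similar.1 ▸ hmin
  obtain ⟨m', hτ, hm'⟩ :=
    τ.legal s' l' hs' h.coupled.validFrom' (isMax_of_not_isMin hmin' hd') hd'
  have hmove : (τ.mimic s').move s l =
      some (G.shiftMove (G.endConf s' l') (G.endConf s l) m') :=
    legalize_mimicProposal _ _ _ h.shadow_max hτ
      (canMove_shiftMove hR h.coupled.similar.symm hm')
  rw [PTG.step_of_not_isMin hd hmin hmove, PTG.step_of_not_isMin hd' hmin' hτ]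
  refine ⟨?_, ?_, (h.coupled.symm.append_shiftMove hR hm').symm⟩
  · rw [shadow_append, h.shadow_min, shadowMove, if_neg hmin]
  · rw [shadow_append, h.shadow_max, shadowMove, if_pos hmin', hτ, Option.getD_some]

lemma step (hR : G.IsUniformRegion R) (hs : G.validConf s) (hs' : G.validConf s')
    (h : Mirrored R σ τ s s' l l') :
    Mirrored R σ τ s s' (G.step σ (τ.mimic s') s l) (G.step (σ.mimic s) τ s' l') := by
  by_cases hd : G.deadlock (G.endConf s l)
  · exact h.step_of_deadlock hR hd
  by_cases hmin : G.isMin (G.endConf s l).1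
  · exact h.step_of_isMin hR hs hd hmin
  · exact h.step_of_not_isMin hR hs' hd hmin

end Mirrored

lemma mirrored_hist (hR : G.IsUniformRegion R) {s s' : G.Conf} (hs : G.validConf s)
    (hs' : G.validConf s') (hss' : Similar R s s') (σ : MinStrategy G) (τ : MaxStrategy G)
    (n : ℕ) :
    Mirrored R σ τ s s' (G.hist σ (τ.mimic s') s n) (G.hist (σ.mimic s) τ s' n) := by
  induction n with
  | zero => exact ⟨rfl, rfl, .nil hss'⟩
  | succ n ih => exact ih.step hR hs hs'

lemma upperVal_le_upperVal_add (hR : G.IsUniformRegion R) {s s' : G.Conf}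
    (hs : G.validConf s) (hs' : G.validConf s') (hss' : Similar R s s') :
    G.upperVal s' ≤ G.upperVal s + (((G.wL + G.Kfin) * |s.2 - s'.2| : ℝ) : EReal) := by
  refine EReal.le_iInf_add_coe fun σ => (iInf_le _ (σ.mimic s)).trans (iSup_le fun τ => ?_)
  exact (playCost_le_of_coupled (mirrored_hist hR hs hs' hss' σ τ · |>.coupled)).trans
    (add_le_add_left (le_iSup (G.playCost s σ ·) (τ.mimic s')) _)

lemma IsUniformRegion.val_le_val_add (hR : G.IsUniformRegion R) (ℓ : G.Loc) {ν ν' : ℝ}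
    (hν : ν ∈ R) (hν' : ν' ∈ R) :
    G.val ℓ ν' ≤ G.val ℓ ν + (((G.wL + G.Kfin) * |ν - ν'| : ℝ) : EReal) :=
  upperVal_le_upperVal_add hR (hR.subset_Icc hν) (hR.subset_Icc hν') ⟨rfl, .inr ⟨hν, hν'⟩⟩

end PTG

open PTG in
/-- **Theorem: continuity of the value on regions.** For every
one-clock PTG `G`, every region `r` and location `ℓ`, the value function
`ν ↦ Val_G(ℓ,ν)` restricted to `r` is either constantly `+∞`, constantly `-∞`, or
finite and continuous on `r`; moreover, in the finite case it is Lipschitz on `r`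
with constant `w_L + K_fin`. -/
theorem ptg_value_continuous_on_regions (G : PTG) (R : Set ℝ) (hR : G.IsRegion R)
    (ℓ : G.Loc) :
    (∀ ν ∈ R, G.val ℓ ν = ⊤) ∨ (∀ ν ∈ R, G.val ℓ ν = ⊥) ∨
    ((∀ ν ∈ R, ∃ v : ℝ, G.val ℓ ν = (v : EReal)) ∧
      ContinuousOn (fun ν => (G.val ℓ ν).toReal) R ∧
      ∀ ν ∈ R, ∀ ν' ∈ R,
        |(G.val ℓ ν).toReal - (G.val ℓ ν').toReal| ≤ (G.wL + G.Kfin) * |ν - ν'|) := by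
  rcases EReal.trichotomy_of_le_add_mul_abs_sub
      fun ν hν ν' hν' => hR.isUniformRegion.val_le_val_add ℓ hν hν' with h | h | ⟨hfin, hlip⟩
  · exact .inl h
  · exact .inr (.inl h)
  · refine .inr (.inr ⟨hfin, ?_, hlip⟩)
    exact (LipschitzOnWith.of_dist_le' fun x hx y hy => by
      simpa only [Real.dist_eq] using hlip x hx y hy).continuousOn
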